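/- Let N be a finite set with a symmetric valuation v, let a, b ∈ N be distinct, and let ε be a real number with 0 < ε ≤ 1/2. Suppose v a b ≥ 0, v i j ≤ 0 whenever {a, b} ∩ {i, j} = ∅, and v a d ≤ ε·(v a b) and v b d ≤ ε·(v a b) for every d ∈ N \ {a, b}. Then every matching μ of N satisfies SW(μ) ≤ v a b, and this bound is attained by the matching whose only two-element part is {a, b}. In other words, the maximum weight matching of a bi-star instance matches the two centers with each other. -/

import Mathlib

/-!
A part of a matching has at most two agents, so its welfare is at most the largest valuation
between two of its members. In a bi-star instance that valuation is at most
`v a b / 2 * #(p ∩ {a, b})`: the centre edge is worth `v a b`, a leaf edge at most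
`ε * v a b ≤ v a b / 2`, and an edge between leaves at most `0`. Since `a` and `b` each lie in
exactly one part, summing over the parts bounds the welfare by `v a b`, which is attained by
pairing `a` with `b` and leaving every other agent alone.
-/

open Finset

/-- Social welfare of a coalition `C`: `SW(C) = (Σ_{i∈C} Σ_{j∈C, j≠i} v i j) / |C|`. -/
noncomputable def coalSW {α : Type*} [DecidableEq α] (v : α → α → ℝ) (C : Finset α) : ℝ :=
  (∑ i ∈ C, ∑ j ∈ C.erase i, v i j) / (C.card : ℝ)

/-- Social welfare of a partition: the sum of the social welfares of its parts.
For a matching and a symmetric valuation with zero diagonal, this equals the sum of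
`v i j` over its two-element parts `{i, j}`. -/
noncomputable def partSW {α : Type*} [DecidableEq α] (v : α → α → ℝ) {N : Finset α}
    (π : Finpartition N) : ℝ :=
  ∑ C ∈ π.parts, coalSW v C

/-- A matching is a partition all of whose parts have at most 2 elements. -/
def IsMatching {α : Type*} [DecidableEq α] {N : Finset α} (π : Finpartition N) : Prop :=
  ∀ p ∈ π.parts, p.card ≤ 2

lemma coalSW_singleton {α : Type*} [DecidableEq α] (v : α → α → ℝ) (i : α) :
    coalSW v {i} = 0 := by
  simp [coalSW]

lemma coalSW_pair {α : Type*} [DecidableEq α] {v : α → α → ℝ} (hsymm : ∀ i j, v i j = v j i)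
    {i j : α} (hij : i ≠ j) : coalSW v {i, j} = v i j := by
  simp [coalSW, sum_pair hij, card_pair hij, erase_insert_eq_erase, hij, hij.symm, hsymm j i]

lemma coalSW_le_of_card_le_two {α : Type*} [DecidableEq α] {v : α → α → ℝ} {p : Finset α}
    {c : ℝ} (hp : #p ≤ 2) (hc : 0 ≤ c) (h : ∀ i ∈ p, ∀ j ∈ p, i ≠ j → v i j ≤ c) :
    coalSW v p ≤ c := by
  rcases p.eq_empty_or_nonempty with rfl | hne
  · simpa [coalSW] using hc -- `coalSW v ∅ = 0 / 0 = 0`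
  have hrow : ∀ i ∈ p, ∑ j ∈ p.erase i, v i j ≤ c := fun i hi ↦
    calc ∑ j ∈ p.erase i, v i j ≤ #(p.erase i) • c :=
          sum_le_card_nsmul _ _ _ fun j hj ↦
            h i hi j (mem_of_mem_erase hj) (ne_of_mem_erase hj).symm
      _ ≤ c := by
          have : #(p.erase i) ≤ 1 := by rw [card_erase_of_mem hi]; omega
          rw [nsmul_eq_mul]
          exact mul_le_of_le_one_left hc (by exact_mod_cast this)
  rw [coalSW, div_le_iff₀ (by exact_mod_cast hne.card_pos), mul_comm, ← nsmul_eq_mul]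
  exact sum_le_card_nsmul _ _ _ hrow

lemma Finpartition.sum_card_inter {α : Type*} [DecidableEq α] {s t : Finset α}
    (P : Finpartition s) (ht : t ⊆ s) : ∑ p ∈ P.parts, #(p ∩ t) = #t := by
  rw [← (P.restrict ht).sum_card_parts, P.sum_restrict ht card card_empty]
  rfl

lemma exists_isMatching_of_mem_parts {α : Type*} [DecidableEq α] (v : α → α → ℝ)
    {N s : Finset α} (hsN : s ⊆ N) (hs : s.Nonempty) (hs2 : #s ≤ 2) :
    ∃ μ : Finpartition N, IsMatching μ ∧ s ∈ μ.parts ∧ (∀ p ∈ μ.parts, p ≠ s → #p = 1) ∧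
      partSW v μ = coalSW v s := by
  let μ := (⊥ : Finpartition (N \ s)).extend hs.ne_empty sdiff_disjoint
    (sdiff_union_of_subset hsN)
  have hparts : μ.parts = insert s (⊥ : Finpartition (N \ s)).parts := rfl
  have hs_notMem : s ∉ (⊥ : Finpartition (N \ s)).parts := by
    rw [Finpartition.mem_bot_iff]
    rintro ⟨x, hx, rfl⟩
    simp at hx
  have hsingle : ∀ p ∈ μ.parts, p ≠ s → #p = 1 := by
    intro p hp hps
    rw [hparts, mem_insert] at hp
    obtain ⟨x, -, rfl⟩ := Finpartition.mem_bot_iff.1 (hp.resolve_left hps)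
    exact card_singleton x
  refine ⟨μ, fun p hp ↦ ?_, hparts ▸ mem_insert_self _ _, hsingle, ?_⟩
  · by_cases hps : p = s
    · exact hps ▸ hs2
    · rw [hsingle p hp hps]
      norm_num
  · rw [partSW, hparts, sum_insert hs_notMem, sum_eq_zero, add_zero]
    intro p hp
    obtain ⟨x, -, rfl⟩ := Finpartition.mem_bot_iff.1 hp
    exact coalSW_singleton v x

structure IsBiStar {α : Type*} (N : Finset α) (v : α → α → ℝ) (a b : α) (ε : ℝ) : Prop where
  symm : ∀ i j, v i j = v j i
  ne : a ≠ b
  ratio_le_half : ε ≤ 1/2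
  center_nonneg : 0 ≤ v a b
  val_nonpos : ∀ i ∈ N, ∀ j ∈ N, i ≠ a → i ≠ b → j ≠ a → j ≠ b → v i j ≤ 0
  leaf_left : ∀ d ∈ N, d ≠ a → d ≠ b → v a d ≤ ε * v a b
  leaf_right : ∀ d ∈ N, d ≠ a → d ≠ b → v b d ≤ ε * v a b

namespace IsBiStar

variable {α : Type*} [DecidableEq α] {N : Finset α} {v : α → α → ℝ} {a b : α} {ε : ℝ}

lemma val_le_half_mul_card_inter (h : IsBiStar N v a b ε) {i j : α} (hi : i ∈ N) (hj : j ∈ N)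
    (hij : i ≠ j) : v i j ≤ v a b / 2 * #({i, j} ∩ {a, b}) := by
  have hleaf : ∀ c ∈ ({a, b} : Finset α), ∀ d ∈ N, d ∉ ({a, b} : Finset α) →
      v c d ≤ v a b / 2 * #({c, d} ∩ {a, b}) := by
    intro c hc d hd hd'
    have hcard : (1 : ℝ) ≤ #({c, d} ∩ {a, b}) := by
      exact_mod_cast card_pos.2 ⟨c, mem_inter.2 ⟨mem_insert_self c {d}, hc⟩⟩
    have hcd : v c d ≤ ε * v a b := by
      simp only [mem_insert, mem_singleton, not_or] at hc hd'
      rcases hc with rfl | rfl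
      exacts [h.leaf_left d hd hd'.1 hd'.2, h.leaf_right d hd hd'.1 hd'.2]
    nlinarith [h.ratio_le_half, h.center_nonneg]
  by_cases hi' : i ∈ ({a, b} : Finset α) <;> by_cases hj' : j ∈ ({a, b} : Finset α)
  · have hab := h.ne
    have hsymm := h.symm
    simp only [mem_insert, mem_singleton] at hi' hj'
    rcases hi' with rfl | rfl <;> rcases hj' with rfl | rfl <;> try exact absurd rfl hij
    · simp [card_pair hab]
    · simp [hsymm i j, pair_comm, card_pair hab]
  · exact hleaf i hi' j hj hj'
  · rw [h.symm, pair_comm]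
    exact hleaf j hj' i hi hi'
  · simp only [mem_insert, mem_singleton, not_or] at hi' hj'
    exact (h.val_nonpos i hi j hj hi'.1 hi'.2 hj'.1 hj'.2).trans
      (mul_nonneg (div_nonneg h.center_nonneg zero_le_two) (Nat.cast_nonneg _))

lemma coalSW_le_half_mul_card_inter (h : IsBiStar N v a b ε) {p : Finset α} (hpN : p ⊆ N)
    (hp : #p ≤ 2) : coalSW v p ≤ v a b / 2 * #(p ∩ {a, b}) := by
  have hc : 0 ≤ v a b / 2 := div_nonneg h.center_nonneg zero_le_two
  refine coalSW_le_of_card_le_two hp (mul_nonneg hc (Nat.cast_nonneg _)) fun i hi j hj hij ↦ ?_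
  refine (h.val_le_half_mul_card_inter (hpN hi) (hpN hj) hij).trans ?_
  gcongr
  exact insert_subset hi (singleton_subset_iff.2 hj)

end IsBiStar

theorem stmt12_general {α : Type*} [DecidableEq α] (N : Finset α) (v : α → α → ℝ)
    (hsymm : ∀ i j, v i j = v j i)
    (a b : α) (ha : a ∈ N) (hb : b ∈ N) (hab : a ≠ b)
    (ε : ℝ) (hε1 : ε ≤ 1/2)
    (hvab : 0 ≤ v a b)
    (hneg : ∀ i ∈ N, ∀ j ∈ N, i ≠ a → i ≠ b → j ≠ a → j ≠ b → v i j ≤ 0)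
    (hleafa : ∀ d ∈ N, d ≠ a → d ≠ b → v a d ≤ ε * v a b)
    (hleafb : ∀ d ∈ N, d ≠ a → d ≠ b → v b d ≤ ε * v a b) :
    (∀ μ : Finpartition N, IsMatching μ → partSW v μ ≤ v a b) ∧
    (∃ μ : Finpartition N, IsMatching μ ∧ ({a, b} : Finset α) ∈ μ.parts ∧
      (∀ p ∈ μ.parts, p.card = 2 → p = ({a, b} : Finset α)) ∧
      partSW v μ = v a b) := by
  have hbi : IsBiStar N v a b ε := ⟨hsymm, hab, hε1, hvab, hneg, hleafa, hleafb⟩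
  have hcenters : {a, b} ⊆ N := insert_subset ha (singleton_subset_iff.2 hb)
  constructor
  · intro μ hμ
    calc partSW v μ ≤ ∑ p ∈ μ.parts, v a b / 2 * #(p ∩ {a, b}) :=
          sum_le_sum fun p hp ↦ hbi.coalSW_le_half_mul_card_inter (μ.le hp) (hμ p hp)
      _ = v a b := by
          rw [← mul_sum, ← Nat.cast_sum, μ.sum_card_inter hcenters, card_pair hab]
          push_cast
          ring
  · obtain ⟨μ, hμ, hmem, hsingle, hSW⟩ := exists_isMatching_of_mem_parts v hcenters
      (insert_nonempty a {b}) (card_pair hab).le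
    refine ⟨μ, hμ, hmem, fun p hp hp2 ↦ ?_, hSW.trans (coalSW_pair hsymm hab)⟩
    by_contra hne
    have := hsingle p hp hne
    omega

/-- Maximum weight matchings in bi-star instances: with centers `a ≠ b`,
`v a b ≥ 0`, all valuations avoiding both centers nonpositive, and all leaf
valuations at most `ε·v a b` for some `0 < ε ≤ 1/2`, every matching of `N` has
social welfare at most `v a b`, and this is attained by a matching whose only
two-element part is `{a, b}`. -/
theorem stmt12 {α : Type*} [DecidableEq α] (N : Finset α) (v : α → α → ℝ)
    (hsymm : ∀ i j, v i j = v j i) (hdiag : ∀ i, v i i = 0)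
    (a b : α) (ha : a ∈ N) (hb : b ∈ N) (hab : a ≠ b)
    (ε : ℝ) (hε0 : 0 < ε) (hε1 : ε ≤ 1/2)
    (hvab : 0 ≤ v a b)
    (hneg : ∀ i ∈ N, ∀ j ∈ N, i ≠ a → i ≠ b → j ≠ a → j ≠ b → v i j ≤ 0)
    (hleafa : ∀ d ∈ N, d ≠ a → d ≠ b → v a d ≤ ε * v a b)
    (hleafb : ∀ d ∈ N, d ≠ a → d ≠ b → v b d ≤ ε * v a b) :
    (∀ μ : Finpartition N, IsMatching μ → partSW v μ ≤ v a b) ∧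
    (∃ μ : Finpartition N, IsMatching μ ∧ ({a, b} : Finset α) ∈ μ.parts ∧
      (∀ p ∈ μ.parts, p.card = 2 → p = ({a, b} : Finset α)) ∧
      partSW v μ = v a b) :=
  stmt12_general N v hsymm a b ha hb hab ε hε1 hvab hneg hleafa hleafb
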